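/- For any random variables X1, X2, X3 and W on a finite probability space with H(W|Xi)=0 for i=1,2,3, the triple mutual information satisfies I(X1;X2;X3) = H(W) + I(X1;X2;X3 | W). -/

import Mathlib

open Finset

/-!
If `W` is a function of `X` on the support of `p`, then adjoining `W` to `X` (or to any tuple
containing `X`) does not change its entropy, so `H(Z | W) = H(Z) - H(W)` for each of the seven
joint variables `Z` in the inclusion–exclusion formula for `I(X1;X2;X3|W)`; the alternating sum
of the `H(W)` terms is `-H(W)`, which gives the identity.

That `H(W | X) = 0` forces `W` to be a function of `X` comes from the strict subadditivity
of `φ(t) = -t log₂ t` on positive reals: `H(W | X)` is a sum over `x` of the nonnegative gaps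
`∑_w φ(P(w, x)) - φ(∑_w P(w, x))`, and a gap vanishes only if at most one `P(w, x)` is positive.
-/

/-- Probability mass of the event `X = a` under weights `p`. -/
noncomputable def pmass {Ω α : Type} [Fintype Ω] [DecidableEq α]
    (p : Ω → ℝ) (X : Ω → α) (a : α) : ℝ :=
  ∑ ω, if X ω = a then p ω else 0

/-- Shannon entropy (base 2) of a random variable `X` on a finite space. -/
noncomputable def ent {Ω α : Type} [Fintype Ω] [Fintype α] [DecidableEq α]
    (p : Ω → ℝ) (X : Ω → α) : ℝ :=
  ∑ a, -(pmass p X a * Real.logb 2 (pmass p X a))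

/-- Conditional Shannon entropy `H(X|Y) = H(X,Y) - H(Y)`. -/
noncomputable def condEnt {Ω α β : Type} [Fintype Ω] [Fintype α] [Fintype β]
    [DecidableEq α] [DecidableEq β] (p : Ω → ℝ) (X : Ω → α) (Y : Ω → β) : ℝ :=
  ent p (fun ω => (X ω, Y ω)) - ent p Y

/-- Conditional mutual information `I(X;Y|W) = H(X|W) + H(Y|W) - H(X,Y|W)`. -/
noncomputable def condMI {Ω α β γ : Type} [Fintype Ω] [Fintype α] [Fintype β] [Fintype γ]
    [DecidableEq α] [DecidableEq β] [DecidableEq γ]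
    (p : Ω → ℝ) (X : Ω → α) (Y : Ω → β) (W : Ω → γ) : ℝ :=
  condEnt p X W + condEnt p Y W - condEnt p (fun ω => (X ω, Y ω)) W

/-- Triple (interaction) mutual information. -/
noncomputable def tripleMI {Ω α β γ : Type} [Fintype Ω] [Fintype α] [Fintype β] [Fintype γ]
    [DecidableEq α] [DecidableEq β] [DecidableEq γ]
    (p : Ω → ℝ) (X : Ω → α) (Y : Ω → β) (Z : Ω → γ) : ℝ :=
  ent p X + ent p Y + ent p Z
    - ent p (fun ω => (X ω, Y ω)) - ent p (fun ω => (X ω, Z ω)) - ent p (fun ω => (Y ω, Z ω))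
    + ent p (fun ω => (X ω, Y ω, Z ω))

/-- Conditional triple mutual information. -/
noncomputable def condTripleMI {Ω α β γ δ : Type}
    [Fintype Ω] [Fintype α] [Fintype β] [Fintype γ] [Fintype δ]
    [DecidableEq α] [DecidableEq β] [DecidableEq γ] [DecidableEq δ]
    (p : Ω → ℝ) (X : Ω → α) (Y : Ω → β) (Z : Ω → γ) (W : Ω → δ) : ℝ :=
  condEnt p X W + condEnt p Y W + condEnt p Z W
    - condEnt p (fun ω => (X ω, Y ω)) W - condEnt p (fun ω => (X ω, Z ω)) W
    - condEnt p (fun ω => (Y ω, Z ω)) W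
    + condEnt p (fun ω => (X ω, Y ω, Z ω)) W

noncomputable def negMulLogb (t : ℝ) : ℝ := -(t * Real.logb 2 t)

lemma negMulLogb_zero : negMulLogb 0 = 0 := by simp [negMulLogb]

lemma negMulLogb_add_lt {a b : ℝ} (ha : 0 < a) (hb : 0 < b) :
    negMulLogb (a + b) < negMulLogb a + negMulLogb b := by
  have hla : Real.logb 2 a < Real.logb 2 (a + b) := Real.logb_lt_logb one_lt_two ha (by linarith)
  have hlb : Real.logb 2 b < Real.logb 2 (a + b) := Real.logb_lt_logb one_lt_two hb (by linarith)
  unfold negMulLogb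
  nlinarith [mul_lt_mul_of_pos_left hla ha, mul_lt_mul_of_pos_left hlb hb]

lemma negMulLogb_add_le {a b : ℝ} (ha : 0 ≤ a) (hb : 0 ≤ b) :
    negMulLogb (a + b) ≤ negMulLogb a + negMulLogb b := by
  rcases ha.eq_or_lt with rfl | ha
  · simp [negMulLogb_zero]
  rcases hb.eq_or_lt with rfl | hb
  · simp [negMulLogb_zero]
  exact (negMulLogb_add_lt ha hb).le

lemma negMulLogb_sum_le {ι : Type*} (s : Finset ι) {f : ι → ℝ} (hf : ∀ i ∈ s, 0 ≤ f i) :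
    negMulLogb (∑ i ∈ s, f i) ≤ ∑ i ∈ s, negMulLogb (f i) :=
  le_sum_of_subadditive_on_pred negMulLogb (0 ≤ ·) negMulLogb_zero.le
    (fun _ _ => negMulLogb_add_le) (fun _ _ => add_nonneg) f hf

lemma negMulLogb_sum_lt {ι : Type*} [DecidableEq ι] {s : Finset ι} {f : ι → ℝ}
    (hf : ∀ i ∈ s, 0 ≤ f i) {i j : ι} (hi : i ∈ s) (hj : j ∈ s) (hij : i ≠ j)
    (hfi : 0 < f i) (hfj : 0 < f j) :
    negMulLogb (∑ k ∈ s, f k) < ∑ k ∈ s, negMulLogb (f k) := by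
  have hf' : ∀ k ∈ s.erase i, 0 ≤ f k := fun k hk => hf k (mem_of_mem_erase hk)
  have hrest : 0 < ∑ k ∈ s.erase i, f k :=
    sum_pos' hf' ⟨j, mem_erase.2 ⟨hij.symm, hj⟩, hfj⟩
  rw [← add_sum_erase s f hi, ← add_sum_erase s _ hi]
  calc negMulLogb (f i + ∑ k ∈ s.erase i, f k)
      < negMulLogb (f i) + negMulLogb (∑ k ∈ s.erase i, f k) := negMulLogb_add_lt hfi hrest
    _ ≤ negMulLogb (f i) + ∑ k ∈ s.erase i, negMulLogb (f k) :=
      by gcongr; exact negMulLogb_sum_le _ hf'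

lemma sum_negMulLogb_of_subsingleton {ι : Type*} {s : Finset ι} {f : ι → ℝ}
    (hf : ∀ i ∈ s, ∀ j ∈ s, f i ≠ 0 → f j ≠ 0 → i = j) :
    ∑ i ∈ s, negMulLogb (f i) = negMulLogb (∑ i ∈ s, f i) := by
  by_cases h : ∀ i ∈ s, f i = 0
  · rw [sum_eq_zero h, negMulLogb_zero]
    exact sum_eq_zero fun i hi => by rw [h i hi, negMulLogb_zero]
  obtain ⟨i, hi, hfi⟩ : ∃ i ∈ s, f i ≠ 0 := by simpa using h
  have hzero : ∀ j ∈ s, j ≠ i → f j = 0 := fun j hj hji =>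
    by_contra fun hfj => hji (hf j hj i hi hfj hfi)
  rw [sum_eq_single_of_mem i hi fun j hj hji => by rw [hzero j hj hji, negMulLogb_zero],
    sum_eq_single_of_mem i hi hzero]

section Entropy

variable {Ω α β : Type} [Fintype Ω] [DecidableEq α] [DecidableEq β] {p : Ω → ℝ}

lemma pmass_nonneg (hp0 : ∀ ω, 0 ≤ p ω) (X : Ω → α) (a : α) : 0 ≤ pmass p X a :=
  sum_nonneg fun ω _ => by split_ifs <;> simp [hp0 ω]

lemma le_pmass_apply (hp0 : ∀ ω, 0 ≤ p ω) (X : Ω → α) (ω : Ω) : p ω ≤ pmass p X (X ω) := by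
  simpa [pmass] using single_le_sum (f := fun ω' => if X ω' = X ω then p ω' else 0)
    (fun ω' _ => by split_ifs <;> simp [hp0 ω']) (mem_univ ω)

lemma exists_of_pmass_ne_zero {X : Ω → α} {a : α} (h : pmass p X a ≠ 0) :
    ∃ ω, p ω ≠ 0 ∧ X ω = a := by
  obtain ⟨ω, -, hω⟩ := exists_ne_zero_of_sum_ne_zero h
  by_cases hX : X ω = a
  · exact ⟨ω, by simpa [hX] using hω, hX⟩
  · simp [hX] at hω

lemma sum_pmass_prod [Fintype β] (X : Ω → α) (Y : Ω → β) (a : α) :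
    ∑ b, pmass p (fun ω => (X ω, Y ω)) (a, b) = pmass p X a := by
  unfold pmass
  rw [sum_comm]
  refine sum_congr rfl fun ω _ => ?_
  by_cases h : X ω = a <;> simp [h, Prod.ext_iff]

lemma pmass_prod_swap (X : Ω → α) (Y : Ω → β) (a : α) (b : β) :
    pmass p (fun ω => (Y ω, X ω)) (b, a) = pmass p (fun ω => (X ω, Y ω)) (a, b) := by
  simp only [pmass, Prod.mk.injEq, and_comm]

variable [Fintype α] [Fintype β]

lemma ent_prod_comm (X : Ω → α) (Y : Ω → β) :
    ent p (fun ω => (Y ω, X ω)) = ent p (fun ω => (X ω, Y ω)) := by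
  simp only [ent, Fintype.sum_prod_type, pmass_prod_swap]
  exact sum_comm

lemma ent_prod_sub_ent (X : Ω → α) (Y : Ω → β) :
    ent p (fun ω => (X ω, Y ω)) - ent p X =
      ∑ a, (∑ b, negMulLogb (pmass p (fun ω => (X ω, Y ω)) (a, b)) -
        negMulLogb (∑ b, pmass p (fun ω => (X ω, Y ω)) (a, b))) := by
  simp only [sum_pmass_prod, sum_sub_distrib, ent, negMulLogb, Fintype.sum_prod_type]

end Entropy

section DeterminedBy

variable {Ω α β δ : Type}

def DeterminedBy (p : Ω → ℝ) (W : Ω → δ) (X : Ω → α) : Prop :=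
  ∀ ω ω', p ω ≠ 0 → p ω' ≠ 0 → X ω = X ω' → W ω = W ω'

variable {p : Ω → ℝ} {W : Ω → δ} {X : Ω → α}

lemma DeterminedBy.prod_right (h : DeterminedBy p W X) (Y : Ω → β) :
    DeterminedBy p W (fun ω => (X ω, Y ω)) :=
  fun ω ω' hω hω' hXY => h ω ω' hω hω' (congrArg Prod.fst hXY)

variable [Fintype Ω] [Fintype α] [Fintype δ] [DecidableEq α] [DecidableEq δ]

lemma ent_prod_of_determinedBy (h : DeterminedBy p W X) :
    ent p (fun ω => (X ω, W ω)) = ent p X := by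
  rw [← sub_eq_zero, ent_prod_sub_ent]
  refine sum_eq_zero fun a _ => sub_eq_zero.2 <| sum_negMulLogb_of_subsingleton ?_
  intro w _ w' _ hw hw'
  obtain ⟨ω, hω, hXW⟩ := exists_of_pmass_ne_zero hw
  obtain ⟨ω', hω', hXW'⟩ := exists_of_pmass_ne_zero hw'
  simp only [Prod.mk.injEq] at hXW hXW'
  rw [← hXW.2, ← hXW'.2]
  exact h ω ω' hω hω' (hXW.1.trans hXW'.1.symm)

lemma condEnt_eq_sub_of_determinedBy (h : DeterminedBy p W X) :
    condEnt p X W = ent p X - ent p W := by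
  rw [condEnt, ent_prod_of_determinedBy h]

lemma determinedBy_of_condEnt_eq_zero (hp0 : ∀ ω, 0 ≤ p ω) (h : condEnt p W X = 0) :
    DeterminedBy p W X := by
  set P := pmass p (fun ω => (X ω, W ω))
  have hP : ∀ x w, 0 ≤ P (x, w) := fun x w => pmass_nonneg hp0 _ _
  have hgap : ∀ x, 0 ≤ ∑ w, negMulLogb (P (x, w)) - negMulLogb (∑ w, P (x, w)) := fun x =>
    sub_nonneg.2 (negMulLogb_sum_le _ fun w _ => hP x w)
  rw [condEnt, ent_prod_comm, ent_prod_sub_ent] at h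
  intro ω ω' hω hω' hX
  by_contra hW
  have hpos : ∀ ω₀, p ω₀ ≠ 0 → 0 < P (X ω₀, W ω₀) := fun ω₀ hω₀ =>
    (lt_of_le_of_ne (hp0 ω₀) (Ne.symm hω₀)).trans_le (le_pmass_apply hp0 _ ω₀)
  have hlt := negMulLogb_sum_lt (fun w _ => hP (X ω) w) (mem_univ (W ω)) (mem_univ (W ω')) hW
    (hpos ω hω) (hX ▸ hpos ω' hω')
  have hzero := (sum_eq_zero_iff_of_nonneg fun x _ => hgap x).1 h (X ω) (mem_univ _)
  linarith

end DeterminedBy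

theorem stmt_7_general {Ω α β γ δ : Type} [Fintype Ω] [Fintype α] [Fintype β] [Fintype γ] [Fintype δ]
    [DecidableEq α] [DecidableEq β] [DecidableEq γ] [DecidableEq δ]
    (p : Ω → ℝ) (hp0 : ∀ ω, 0 ≤ p ω)
    (X1 : Ω → α) (X2 : Ω → β) (X3 : Ω → γ) (W : Ω → δ)
    (hW1 : condEnt p W X1 = 0) (hW2 : condEnt p W X2 = 0) (hW3 : condEnt p W X3 = 0) :
    tripleMI p X1 X2 X3 = ent p W + condTripleMI p X1 X2 X3 W := by
  have h1 := determinedBy_of_condEnt_eq_zero hp0 hW1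
  have h2 := determinedBy_of_condEnt_eq_zero hp0 hW2
  have h3 := determinedBy_of_condEnt_eq_zero hp0 hW3
  rw [condTripleMI, condEnt_eq_sub_of_determinedBy h1, condEnt_eq_sub_of_determinedBy h2,
    condEnt_eq_sub_of_determinedBy h3, condEnt_eq_sub_of_determinedBy (h1.prod_right X2),
    condEnt_eq_sub_of_determinedBy (h1.prod_right X3),
    condEnt_eq_sub_of_determinedBy (h2.prod_right X3),
    condEnt_eq_sub_of_determinedBy (h1.prod_right fun ω => (X2 ω, X3 ω)), tripleMI]
  ring

/-- if `H(W|Xi) = 0` for `i = 1,2,3`, then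
`I(X1;X2;X3) = H(W) + I(X1;X2;X3|W)`. -/
theorem stmt_7 {Ω α β γ δ : Type} [Fintype Ω] [Fintype α] [Fintype β] [Fintype γ] [Fintype δ]
    [DecidableEq α] [DecidableEq β] [DecidableEq γ] [DecidableEq δ]
    (p : Ω → ℝ) (hp0 : ∀ ω, 0 ≤ p ω) (hp1 : ∑ ω, p ω = 1)
    (X1 : Ω → α) (X2 : Ω → β) (X3 : Ω → γ) (W : Ω → δ)
    (hW1 : condEnt p W X1 = 0) (hW2 : condEnt p W X2 = 0) (hW3 : condEnt p W X3 = 0) :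
    tripleMI p X1 X2 X3 = ent p W + condTripleMI p X1 X2 X3 W :=
  stmt_7_general p hp0 X1 X2 X3 W hW1 hW2 hW3
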